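/- arXiv:2309.14469 — 5 statements merged into one kernel-verified Lean document; each statement's English description precedes it below -/
import Mathlib

section
/- Let (L,v) be a Henselian valued field of equicharacteristic 0 and (K,v) ⊆ (L,v) a valued subfield with the same residue field k_K = k_L. If γ ∈ Γ_L satisfies n·γ ∈ Γ_K = v(K^×) for some n ≥ 1, then there exists a ∈ L with aⁿ ∈ K and v(a) = γ. -/
open Polynomial

namespace AddValuation

def IsHenselian {R Γ₀ : Type*} [CommRing R] [LinearOrderedAddCommMonoidWithTop Γ₀]
    (v : AddValuation R Γ₀) : Prop :=
  ∀ P : R[X], (∀ i, 0 ≤ v (P.coeff i)) →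
    ∀ a : R, 0 ≤ v a → 0 < v (P.eval a) → v (P.derivative.eval a) = 0 →
      ∃ c : R, 0 ≤ v c ∧ P.eval c = 0 ∧ 0 < v (c - a)

section Ring

variable {R Γ₀ : Type*} [CommRing R] [LinearOrderedAddCommMonoidWithTop Γ₀]
  (v : AddValuation R Γ₀)

lemma map_eq_zero_of_pos_sub {x y : R} (hx : v x = 0) (h : 0 < v (x - y)) : v y = 0 := by
  rw [v.map_eq_of_lt_sub (x := x) (by rwa [hx, v.map_sub_swap]), hx]

lemma coeff_X_pow_sub_C_nonneg {w : R} (hw : 0 ≤ v w) (n i : ℕ) :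
    0 ≤ v ((X ^ n - C w).coeff i) := by
  have hX : 0 ≤ v ((X ^ n : R[X]).coeff i) := by
    rw [coeff_X_pow]; split_ifs <;> simp
  have hC : 0 ≤ v ((C w).coeff i) := by
    rw [coeff_C]; split_ifs <;> simp [hw]
  rw [coeff_sub]
  exact (le_min hX hC).trans (v.map_sub _ _)

lemma exists_pow_eq_of_pos_sub_one (hv : v.IsHenselian) {n : ℕ} (hn : v (n : R) = 0) {w : R}
    (hw : 0 < v (w - 1)) : ∃ t : R, t ^ n = w ∧ v t = 0 := by
  have hw0 : v w = 0 := v.map_eq_zero_of_pos_sub (x := 1) v.map_one (by rwa [v.map_sub_swap])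
  obtain ⟨t, -, ht, ht1⟩ := hv (X ^ n - C w) (v.coeff_X_pow_sub_C_nonneg hw0.ge n) 1
    (by simp) (by simpa [v.map_sub_swap] using hw) (by simpa [derivative_X_pow] using hn)
  refine ⟨t, by simpa [sub_eq_zero] using ht, ?_⟩
  exact v.map_eq_zero_of_pos_sub (x := 1) v.map_one (by rwa [v.map_sub_swap])

end Ring

section Field

variable {K Γ₀ : Type*} [Field K] [LinearOrderedAddCommGroupWithTop Γ₀]
  (v : AddValuation K Γ₀)

lemma map_div_eq_zero_of_map_eq {x y : K} (hy : y ≠ 0) (h : v x = v y) : v (x / y) = 0 := by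
  rw [v.map_div, h,
    LinearOrderedAddCommGroupWithTop.sub_self_eq_zero_of_ne_top (v.ne_top_iff.mpr hy)]

lemma pos_map_div_sub_one {x y : K} (hy : v y = 0) (h : 0 < v (x - y)) : 0 < v (x / y - 1) := by
  have hy0 : y ≠ 0 := v.ne_top_iff.mp (by simp [hy])
  rwa [← div_self hy0, ← sub_div, v.map_div, hy, sub_zero]

end Field

end AddValuation

theorem stmt_9_general {L Γ : Type*} [Field L] [AddCommGroup Γ] [LinearOrder Γ] [IsOrderedAddMonoid Γ]
    (v : AddValuation L (WithTop Γ)) (K : Subfield L)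
    (hres0 : ∀ n : ℕ, 0 < n → v (n : L) = 0)
    (hhens : ∀ P : Polynomial L, (∀ i, 0 ≤ v (P.coeff i)) →
      ∀ a : L, 0 ≤ v a → 0 < v (P.eval a) → v (P.derivative.eval a) = 0 →
        ∃ c : L, 0 ≤ v c ∧ P.eval c = 0 ∧ 0 < v (c - a))
    (hsameres : ∀ x : L, v x = 0 → ∃ y ∈ K, 0 < v (x - y))
    (n : ℕ) (hn : 1 ≤ n) (c : L)
    (d : L) (hd : d ∈ K) (hd0 : d ≠ 0) (hγ : v (c ^ n) = v d) :
    ∃ a : L, a ^ n ∈ K ∧ v a = v c := by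
  -- `u = cⁿ / d` is a unit; dividing by a lift `y ∈ K` of its residue leaves a `1`-unit, whose
  -- `n`-th root `t` exists by Hensel. Then `(c / t)ⁿ = d * y ∈ K`.
  set u := c ^ n / d
  have hu : v u = 0 := v.map_div_eq_zero_of_map_eq hd0 hγ
  obtain ⟨y, hyK, huy⟩ := hsameres u hu
  have hy : v y = 0 := v.map_eq_zero_of_pos_sub hu huy
  obtain ⟨t, htn, ht⟩ := v.exists_pow_eq_of_pos_sub_one hhens (hres0 n hn)
    (v.pos_map_div_sub_one hy huy)
  have hu0 : u ≠ 0 := v.ne_top_iff.mp (by simp [hu])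
  have hy0 : y ≠ 0 := v.ne_top_iff.mp (by simp [hy])
  have ht0 : t ≠ 0 := v.ne_top_iff.mp (by simp [ht])
  refine ⟨c / t, ?_, by rw [v.map_div, ht, sub_zero]⟩
  have hcn : c ^ n = u * d := (div_mul_cancel₀ _ hd0).symm
  have : (c / t) ^ n = d * y := by
    rw [div_pow, htn, hcn]
    field_simp
  exact this ▸ K.mul_mem hd hyK

/-- Let `(L,v)` be a Henselian valued field of equicharacteristic `0` and `K ⊆ L` a
valued subfield with the same residue field (every unit of `O_L` is congruent mod `m_L`
to an element of `K`). If `γ ∈ Γ_L` (given as `γ = v(c)`, `c ∈ L^×`) satisfies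
`n·γ ∈ Γ_K = v(K^×)` for some `n ≥ 1`, then there exists `a ∈ L` with `aⁿ ∈ K` and
`v(a) = γ`. -/
theorem stmt_9 {L Γ : Type*} [Field L] [CharZero L] [AddCommGroup Γ] [LinearOrder Γ] [IsOrderedAddMonoid Γ]
    (v : AddValuation L (WithTop Γ)) (K : Subfield L)
    (hres0 : ∀ n : ℕ, 0 < n → v (n : L) = 0)
    (hhens : ∀ P : Polynomial L, (∀ i, 0 ≤ v (P.coeff i)) →
      ∀ a : L, 0 ≤ v a → 0 < v (P.eval a) → v (P.derivative.eval a) = 0 →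
        ∃ c : L, 0 ≤ v c ∧ P.eval c = 0 ∧ 0 < v (c - a))
    (hsameres : ∀ x : L, v x = 0 → ∃ y ∈ K, 0 < v (x - y))
    (n : ℕ) (hn : 1 ≤ n) (c : L) (hc : c ≠ 0)
    (d : L) (hd : d ∈ K) (hd0 : d ≠ 0) (hγ : v (c ^ n) = v d) :
    ∃ a : L, a ^ n ∈ K ∧ v a = v c :=
  stmt_9_general v K hres0 hhens hsameres n hn c d hd hd0 hγ
end

section
/- Let (K,v) be a Henselian valued field whose residue field has characteristic 0. Then K has no proper immediate algebraic valued field extension, i.e., if (L,w) ⊇ (K,v) is a field-algebraic valued field extension with k_L = k_K and Γ_L = Γ_K, then L = K. -/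
/-!
Let `x ∈ L \ K`. As `L/K` is immediate, the values `v (x - c)`, `c ∈ K`, have no largest
element, so choosing `c_t ∈ K` with `v (x - c_t) = t` gives a pseudo-Cauchy family in `K` with
pseudo-limit `x` and no pseudo-limit in `K`. If `P ≠ 0` over `K` kills `x`, the dominant Taylor
term of `P` at `x` shows that `v (P c_t)` eventually equals `μ + h t` with `h ≥ 1`, so it is not
eventually constant.

On the other hand (Kaplansky), `v (q c_t)` is eventually constant for every `q ∈ K[X]`. For a
counterexample `q` of minimal degree the Hasse derivatives of `q` have eventually constant
values, so a single Taylor term `a_h (c_{t'} - c_t) ^ h` of `q` at `c_t` dominates and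
`v (q c_t) = v (a_h (c_{t'} - c_t) ^ h)`. Rescaled, this is exactly the situation of Hensel's
lemma, the derivative being a unit because `h` is invertible in residue characteristic `0`. So
`q` has a root `r ∈ K`, and then `q = (X - r) q₁` has eventually constant values after all.
-/

open Filter Polynomial

namespace AddValuation

variable {R Γ₀ : Type*} [Ring R] [LinearOrderedAddCommMonoidWithTop Γ₀] (v : AddValuation R Γ₀)

theorem map_sum_eq_of_lt {ι : Type*} [DecidableEq ι] {s : Finset ι} {f : ι → R} {j : ι}
    (hj : j ∈ s) (hf : ∀ i ∈ s \ {j}, v (f j) < v (f i)) :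
    v (∑ i ∈ s, f i) = v (f j) :=
  Valuation.map_sum_eq_of_lt v hj hf

@[simp]
theorem comap_apply {S : Type*} [Ring S] (f : S →+* R) (s : S) : v.comap f s = v (f s) :=
  rfl

end AddValuation

section PseudoCauchy

variable {Γ : Type*} [AddCommGroup Γ] [LinearOrder Γ] [IsOrderedAddMonoid Γ]

theorem add_nsmul_lt_add_nsmul_of_le {μ ν s t : Γ} {i j : ℕ} (hij : i < j) (hst : s < t)
    (h : μ + i • s ≤ ν + j • s) : μ + i • t < ν + j • t := by
  have hd : i • (t - s) < j • (t - s) := nsmul_lt_nsmul_left (sub_pos.2 hst) hij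
  calc μ + i • t = (μ + i • s) + i • (t - s) := by rw [nsmul_sub]; abel
    _ < (ν + j • s) + j • (t - s) := add_lt_add_of_le_of_lt h hd
    _ = ν + j • t := by rw [nsmul_sub]; abel

theorem add_nsmul_coe_lt_add_nsmul_coe {μ : WithTop Γ} (hμ : μ ≠ ⊤) {h : ℕ} (hh : h ≠ 0)
    {s t : Γ} (hst : s < t) : μ + h • (s : WithTop Γ) < μ + h • (t : WithTop Γ) := by
  lift μ to Γ using hμ
  exact_mod_cast (add_lt_add_iff_left μ).2 (nsmul_lt_nsmul_right hh hst)

variable {α : Type*} [LinearOrder α] [NoMaxOrder α] {τ : α → Γ}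

theorem eventually_lt_or_eventually_lt_of_lt (hτ : StrictMono τ) (μ ν : Γ) {i j : ℕ}
    (hij : i < j) :
    (∀ᶠ t in atTop, μ + i • τ t < ν + j • τ t) ∨ ∀ᶠ t in atTop, ν + j • τ t < μ + i • τ t := by
  by_cases h : ∃ t₀, μ + i • τ t₀ ≤ ν + j • τ t₀
  · obtain ⟨t₀, ht₀⟩ := h
    exact .inl <| (eventually_gt_atTop t₀).mono fun t ht =>
      add_nsmul_lt_add_nsmul_of_le hij (hτ ht) ht₀
  · push Not at h
    exact .inr (.of_forall h)

theorem eventually_lt_or_eventually_lt_of_ne (hτ : StrictMono τ) {μ : WithTop Γ} (ν : WithTop Γ)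
    (hμ : μ ≠ ⊤) {i j : ℕ} (hij : i ≠ j) :
    (∀ᶠ t in atTop, μ + i • (τ t : WithTop Γ) < ν + j • (τ t : WithTop Γ)) ∨
      ∀ᶠ t in atTop, ν + j • (τ t : WithTop Γ) < μ + i • (τ t : WithTop Γ) := by
  lift μ to Γ using hμ
  induction ν with
  | top => exact .inl (.of_forall fun t => by simp [← WithTop.coe_nsmul])
  | coe ν =>
    simp only [← WithTop.coe_nsmul, ← WithTop.coe_add, WithTop.coe_lt_coe]
    rcases hij.lt_or_gt with hij | hij
    · exact eventually_lt_or_eventually_lt_of_lt hτ μ ν hij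
    · exact (eventually_lt_or_eventually_lt_of_lt hτ ν μ hij).symm

theorem exists_eventually_add_nsmul_lt [Nonempty α] (hτ : StrictMono τ) (I : Finset ℕ)
    (μ : ℕ → WithTop Γ) (hI : ∃ i ∈ I, μ i ≠ ⊤) :
    ∃ h ∈ I, μ h ≠ ⊤ ∧ ∀ᶠ t in atTop, ∀ j ∈ I, j ≠ h →
      μ h + h • (τ t : WithTop Γ) < μ j + j • (τ t : WithTop Γ) := by
  set line : ℕ → α → WithTop Γ := fun i t => μ i + i • (τ t : WithTop Γ)
  -- At a suitable `t₀` every comparison of two lines that holds eventually already holds, so the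
  -- line that is lowest at `t₀` is eventually strictly below all the others.
  have hstable : ∀ᶠ t in atTop, ∀ i ∈ I, ∀ j ∈ I,
      (∀ᶠ t' in atTop, line i t' < line j t') → line i t < line j t := by
    simp only [eventually_all_finset, eventually_imp_distrib_left]
    exact fun _ _ _ _ h => h
  obtain ⟨t₀, ht₀⟩ := hstable.exists
  obtain ⟨i, hiI, hi⟩ := hI
  obtain ⟨h, hhI, hmin⟩ := I.exists_min_image (line · t₀) ⟨i, hiI⟩
  have hh : μ h ≠ ⊤ := by
    intro htop
    have := hmin i hiI
    simp only [line, htop, top_add, top_le_iff] at this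
    lift μ i to Γ using hi with μi
    exact WithTop.add_ne_top.2 ⟨WithTop.coe_ne_top, by simp [← WithTop.coe_nsmul]⟩ this
  refine ⟨h, hhI, hh, ?_⟩
  rw [eventually_all_finset]
  intro j hjI
  rw [eventually_imp_distrib_left]
  intro hjh
  exact (eventually_lt_or_eventually_lt_of_ne hτ (μ j) hh (Ne.symm hjh)).resolve_right
    fun hjh' => (hmin j hjI).not_gt (ht₀ j hjI h hhI hjh')

theorem not_eventuallyConst_add_nsmul [Nonempty α] (hτ : StrictMono τ) {μ : WithTop Γ}
    (hμ : μ ≠ ⊤) {h : ℕ} (hh : h ≠ 0) :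
    ¬ EventuallyConst (fun t => μ + h • (τ t : WithTop Γ)) atTop := by
  rw [eventuallyConst_iff_exists_eventuallyEq]
  rintro ⟨γ, hγ⟩
  obtain ⟨t₀, ht₀⟩ := hγ.exists
  obtain ⟨t₁, ht₁, ht₁γ⟩ := ((eventually_gt_atTop t₀).and hγ).exists
  exact (add_nsmul_coe_lt_add_nsmul_coe hμ hh (hτ ht₁)).ne (ht₀.trans ht₁γ.symm)

section ValuedField

variable {F : Type*} [Field F] (w : AddValuation F (WithTop Γ))

theorem valuation_eval_sub_eval_eq (f : F[X]) (y z : F) {h : ℕ}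
    (hh : h ∈ Finset.Icc 1 f.natDegree)
    (hdom : ∀ j ∈ Finset.Icc 1 f.natDegree, j ≠ h →
      w ((taylor y f).coeff h * (z - y) ^ h) < w ((taylor y f).coeff j * (z - y) ^ j)) :
    w (f.eval z - f.eval y) = w ((taylor y f).coeff h * (z - y) ^ h) := by
  classical
  have hexpand : f.eval z - f.eval y =
      ∑ i ∈ Finset.Icc 1 f.natDegree, (taylor y f).coeff i * (z - y) ^ i := by
    have h0 : 0 ∈ Finset.range (f.natDegree + 1) := by simp
    have herase : (Finset.range (f.natDegree + 1)).erase 0 = Finset.Icc 1 f.natDegree := by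
      ext i; simp only [Finset.mem_erase, Finset.mem_range, Finset.mem_Icc]; omega
    rw [← taylor_eval_sub y, eval_eq_sum_range, natDegree_taylor, ← Finset.add_sum_erase _ _ h0,
      herase, taylor_coeff_zero]
    ring
  rw [hexpand]
  exact w.map_sum_eq_of_lt hh fun j hj =>
    hdom j (Finset.mem_sdiff.1 hj).1 (by simpa using (Finset.mem_sdiff.1 hj).2)

theorem not_eventuallyConst_valuation_eval [Nonempty α] (hτ : StrictMono τ) (x : F) (y : α → F)
    (hy : ∀ t, w (y t - x) = τ t) {P : F[X]} (hP : P ≠ 0) (hPx : P.eval x = 0) :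
    ¬ EventuallyConst (fun t => w (P.eval (y t))) atTop := by
  have hN : 0 < P.natDegree := natDegree_pos_iff_degree_pos.2 (degree_pos_of_root hP hPx)
  have hI : ∃ i ∈ Finset.Icc 1 P.natDegree, w ((taylor x P).coeff i) ≠ ⊤ := by
    refine ⟨P.natDegree, Finset.mem_Icc.2 ⟨hN, le_rfl⟩, ?_⟩
    rw [w.ne_top_iff, ← natDegree_taylor P x, coeff_natDegree, leadingCoeff_taylor]
    exact leadingCoeff_ne_zero.2 hP
  obtain ⟨h, hhI, hh, hdom⟩ :=
    exists_eventually_add_nsmul_lt hτ _ (fun i => w ((taylor x P).coeff i)) hI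
  have hterm : ∀ t i, w ((taylor x P).coeff i * (y t - x) ^ i) =
      w ((taylor x P).coeff i) + i • (τ t : WithTop Γ) := by
    intro t i
    rw [w.map_mul, w.map_pow, hy]
  refine fun hconst => not_eventuallyConst_add_nsmul hτ hh
    (Nat.one_le_iff_ne_zero.1 (Finset.mem_Icc.1 hhI).1) (hconst.congr ?_)
  filter_upwards [hdom] with t ht
  have := valuation_eval_sub_eval_eq w P x (y t) hhI fun j hj hjh => by
    simpa only [hterm] using ht j hj hjh
  rwa [hPx, sub_zero, hterm] at this

def LiftsSimpleRoots : Prop :=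
  ∀ D : F[X], (∀ i, 0 ≤ w (D.coeff i)) → ∀ r, 0 ≤ w r → 0 < w (D.eval r) →
    w (D.derivative.eval r) = 0 → ∃ ρ, D.eval ρ = 0

variable {w}

theorem exists_root_of_dominant_coeff (hH : LiftsSimpleRoots w)
    (hres : ∀ n : ℕ, 0 < n → w n = 0) (D : F[X]) (hD : ∀ i, 0 ≤ w (D.coeff i))
    (hD1 : 0 < w (D.eval 1)) {h : ℕ} (hh : 0 < h) (hDh : w (D.coeff h) = 0)
    (hDj : ∀ j, 0 < j → j ≠ h → 0 < w (D.coeff j)) : ∃ ρ, D.eval ρ = 0 := by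
  classical
  refine hH D hD 1 (by simp) hD1 ?_
  have hhD : h ∈ Finset.range (D.natDegree + 1) := by
    refine Finset.mem_range_succ_iff.2 (le_natDegree_of_ne_zero ?_)
    rw [← w.ne_top_iff, hDh]
    exact WithTop.coe_ne_top
  have hterm : w (D.coeff h * h) = 0 := by rw [w.map_mul, hDh, hres h hh, add_zero]
  rw [derivative_eval, sum_over_range _ (by simp), ← hterm]
  simp only [one_pow, mul_one]
  refine w.map_sum_eq_of_lt hhD fun j hj => ?_
  have hjh : j ≠ h := by simpa using (Finset.mem_sdiff.1 hj).2
  rw [hterm]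
  rcases Nat.eq_zero_or_pos j with rfl | hj0
  · simp
  · rw [w.map_mul, hres j hj0, add_zero]
    exact hDj j hj0 hjh

theorem exists_root_of_dominant_term (hH : LiftsSimpleRoots w)
    (hres : ∀ n : ℕ, 0 < n → w n = 0) (q : F[X]) (c s : F) {h : ℕ}
    (hh : h ∈ Finset.Icc 1 q.natDegree)
    (hdom : ∀ j ∈ Finset.Icc 1 q.natDegree, j ≠ h →
      w ((taylor c q).coeff h * s ^ h) < w ((taylor c q).coeff j * s ^ j))
    (h0 : w ((taylor c q).coeff h * s ^ h) ≤ w (q.eval c))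
    (h1 : w ((taylor c q).coeff h * s ^ h) < w (q.eval (c + s))) :
    ∃ r, q.eval r = 0 := by
  set m := (taylor c q).coeff h * s ^ h
  have hmtop : w m ≠ ⊤ := (h1.trans_le le_top).ne
  have hm : m ≠ 0 := w.ne_top_iff.1 hmtop
  -- `D(z) = q(c + s z) / m`, normalised so that its coefficient of index `h` is `1`.
  set D := C m⁻¹ * (taylor c q).comp (C s * X)
  have hDeval : ∀ z, D.eval z * m = q.eval (s * z + c) := by
    intro z
    simp [D, taylor_eval, mul_comm _ m, ← mul_assoc, mul_inv_cancel₀ hm]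
  have hDcoeff : ∀ j, w (D.coeff j) + w m = w ((taylor c q).coeff j * s ^ j) := by
    intro j
    rw [← w.map_mul]
    simp [D, mul_comm _ m, ← mul_assoc, mul_inv_cancel₀ hm]
  have hpos : ∀ j, 0 < j → j ≠ h → 0 < w (D.coeff j) := by
    intro j hj hjh
    rw [← WithTop.add_lt_add_iff_right hmtop, zero_add, hDcoeff]
    by_cases hjN : j ≤ q.natDegree
    · exact hdom j (Finset.mem_Icc.2 ⟨hj, hjN⟩) hjh
    · rw [coeff_eq_zero_of_natDegree_lt (by rw [natDegree_taylor]; omega), zero_mul, w.map_zero]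
      exact h1.trans_le le_top
  have hnonneg : ∀ j, 0 ≤ w (D.coeff j) := by
    intro j
    rcases Nat.eq_zero_or_pos j with rfl | hj
    · rwa [← WithTop.add_le_add_iff_right hmtop, zero_add, hDcoeff, pow_zero, mul_one,
        taylor_coeff_zero]
    rcases eq_or_ne j h with rfl | hjh
    · rw [← WithTop.add_le_add_iff_right hmtop, zero_add, hDcoeff]
    · exact (hpos j hj hjh).le
  have hD1 : 0 < w (D.eval 1) := by
    rw [← WithTop.add_lt_add_iff_right hmtop, zero_add, ← w.map_mul, hDeval, mul_one, add_comm]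
    exact h1
  have hDh : w (D.coeff h) = 0 := by
    rw [← WithTop.add_right_inj hmtop, zero_add, hDcoeff]
  obtain ⟨ρ, hρ⟩ :=
    exists_root_of_dominant_coeff hH hres D hnonneg hD1 (Finset.mem_Icc.1 hh).1 hDh hpos
  exact ⟨s * ρ + c, by rw [← hDeval, hρ, zero_mul]⟩

theorem eventually_valuation_eq_of_valuation_sub (f : α → F) (g : α → WithTop Γ)
    (hf : ¬ EventuallyConst (fun t => w (f t)) atTop)
    (h : ∀ᶠ t in atTop, ∀ t', t < t' → w (f t' - f t) = g t) :
    ∀ᶠ t in atTop, w (f t) = g t := by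
  filter_upwards [h] with t ht
  by_contra hne
  refine hf (eventuallyConst_iff_exists_eventuallyEq.2 ⟨min (w (f t)) (g t), ?_⟩)
  filter_upwards [eventually_gt_atTop t] with t' htt'
  rw [← ht t' htt'] at hne ⊢
  rw [← w.map_add_of_distinct_val hne, add_sub_cancel]

variable (a : α → F)

theorem exists_root_of_eventuallyConst_hasseDeriv [Nonempty α] (hH : LiftsSimpleRoots w)
    (hres : ∀ n : ℕ, 0 < n → w n = 0) (hτ : StrictMono τ)
    (ha : ∀ s t, s < t → w (a t - a s) = τ s) (q : F[X]) (hN : 0 < q.natDegree)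
    (hq : ¬ EventuallyConst (fun t => w (q.eval (a t))) atTop)
    (hhasse : ∀ i ∈ Finset.Icc 1 q.natDegree,
      EventuallyConst (fun t => w ((hasseDeriv i q).eval (a t))) atTop) :
    ∃ r, q.eval r = 0 := by
  set I := Finset.Icc 1 q.natDegree
  choose! μ hμ using fun i hi => eventuallyConst_iff_exists_eventuallyEq.1 (hhasse i hi)
  have hcoeff : ∀ᶠ t in atTop, ∀ i ∈ I, w ((taylor (a t) q).coeff i) = μ i := by
    simp only [eventually_all_finset, taylor_coeff]
    exact hμ
  have hμN : μ q.natDegree ≠ ⊤ := by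
    obtain ⟨t, ht⟩ := hcoeff.exists
    rw [← ht _ (Finset.mem_Icc.2 ⟨hN, le_rfl⟩), taylor_coeff, hasseDeriv_natDegree_eq_C, eval_C,
      w.ne_top_iff, leadingCoeff_ne_zero]
    rintro rfl
    simp at hN
  obtain ⟨h, hhI, hh, hdom⟩ :=
    exists_eventually_add_nsmul_lt hτ I μ ⟨_, Finset.mem_Icc.2 ⟨hN, le_rfl⟩, hμN⟩
  have hterm : ∀ᶠ t in atTop, ∀ t', t < t' → ∀ i ∈ I,
      w ((taylor (a t) q).coeff i * (a t' - a t) ^ i) = μ i + i • (τ t : WithTop Γ) := by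
    filter_upwards [hcoeff] with t ht t' htt' i hi
    rw [w.map_mul, w.map_pow, ht i hi, ha t t' htt']
  have hdiff : ∀ᶠ t in atTop, ∀ t', t < t' →
      w (q.eval (a t') - q.eval (a t)) = μ h + h • (τ t : WithTop Γ) := by
    filter_upwards [hterm, hdom] with t ht hd t' htt'
    rw [valuation_eval_sub_eval_eq w q (a t) (a t') hhI fun j hj hjh => by
      rw [ht t' htt' h hhI, ht t' htt' j hj]; exact hd j hj hjh, ht t' htt' h hhI]
  have hval := eventually_valuation_eq_of_valuation_sub (fun t => q.eval (a t)) _ hq hdiff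
  obtain ⟨t, ht, hdt, hvt⟩ := (hterm.and (hdom.and hval)).exists
  obtain ⟨t', htt', hvt'⟩ := ((eventually_gt_atTop t).and hval).exists
  refine exists_root_of_dominant_term hH hres q (a t) (a t' - a t) hhI
    (fun j hj hjh => ?_) ?_ ?_
  · rw [ht t' htt' h hhI, ht t' htt' j hj]
    exact hdt j hj hjh
  · rw [ht t' htt' h hhI, hvt]
  · rw [ht t' htt' h hhI, add_sub_cancel, hvt']
    exact add_nsmul_coe_lt_add_nsmul_coe hh (Nat.one_le_iff_ne_zero.1 (Finset.mem_Icc.1 hhI).1)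
      (hτ htt')

theorem eventuallyConst_valuation_eval [Nonempty α] (hH : LiftsSimpleRoots w)
    (hres : ∀ n : ℕ, 0 < n → w n = 0) (hτ : StrictMono τ)
    (ha : ∀ s t, s < t → w (a t - a s) = τ s)
    (hlim : ∀ c, EventuallyConst (fun t => w (a t - c)) atTop) (q : F[X]) :
    EventuallyConst (fun t => w (q.eval (a t))) atTop := by
  induction hN : q.natDegree using Nat.strong_induction_on generalizing q with
  | _ N ih =>
  by_contra hq
  have hN0 : 0 < N := by
    refine Nat.pos_of_ne_zero fun h0 => hq ?_
    rw [eq_C_of_natDegree_eq_zero (hN.trans h0)]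
    simp
  have hhasse : ∀ i ∈ Finset.Icc 1 q.natDegree,
      EventuallyConst (fun t => w ((hasseDeriv i q).eval (a t))) atTop := fun i hi =>
    ih _ (by have := natDegree_hasseDeriv_le q i; have := (Finset.mem_Icc.1 hi).1; omega) _ rfl
  obtain ⟨r, hr⟩ := exists_root_of_eventuallyConst_hasseDeriv a hH hres hτ ha q (hN ▸ hN0) hq hhasse
  have hfactor : (X - C r) * (q /ₘ (X - C r)) = q := mul_divByMonic_eq_iff_isRoot.2 hr
  have hW : (q /ₘ (X - C r)).natDegree < N := by
    rw [natDegree_divByMonic _ (monic_X_sub_C r), natDegree_X_sub_C, hN]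
    omega
  refine hq (((hlim r).add (ih _ hW _ rfl)).congr (.of_forall fun t => ?_))
  conv_rhs => rw [← hfactor]
  simp [w.map_mul]

end ValuedField

end PseudoCauchy

section Approximation

variable {L Γ : Type*} [Field L] [AddCommGroup Γ] [LinearOrder Γ] [IsOrderedAddMonoid Γ]
  (v : AddValuation L (WithTop Γ)) (K : Subfield L) (x : L)

def approxLevels : Set Γ := {t | ∃ c : K, v (x - c) = t}

noncomputable def approximant (t : approxLevels v K x) : K := t.2.choose

theorem valuation_sub_approximant (t : approxLevels v K x) : v (x - approximant v K x t) = t :=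
  t.2.choose_spec

theorem nonempty_approxLevels (hx : x ≠ 0) : Nonempty (approxLevels v K x) := by
  obtain ⟨t, ht⟩ := WithTop.ne_top_iff_exists.1 (v.ne_top_iff.2 hx)
  exact ⟨t, 0, by simpa using ht.symm⟩

theorem noMaxOrder_approxLevels (hΓ : ∀ y : L, y ≠ 0 → ∃ b ∈ K, b ≠ 0 ∧ v b = v y)
    (hk : ∀ y : L, v y = 0 → ∃ b ∈ K, 0 < v (y - b)) (hx : x ∉ K) :
    NoMaxOrder (approxLevels v K x) := by
  refine ⟨fun t => ?_⟩
  set c := approximant v K x t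
  have hc := valuation_sub_approximant v K x t
  have hxc : x - c ≠ 0 := sub_ne_zero.2 fun h => hx (h ▸ c.2)
  obtain ⟨e, heK, he0, hev⟩ := hΓ _ hxc
  have hetop : v e ≠ ⊤ := v.ne_top_iff.2 he0
  have hunit : v ((x - c) / e) = 0 := by
    rw [← WithTop.add_right_inj hetop, zero_add, ← v.map_mul, div_mul_cancel₀ _ he0, hev]
  obtain ⟨d, hdK, hdv⟩ := hk _ hunit
  set c' : K := c + ⟨e, heK⟩ * ⟨d, hdK⟩
  have hxc' : x - c' = e * ((x - c) / e - d) := by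
    simp only [c', Subfield.coe_add, Subfield.coe_mul]
    field_simp
    ring
  have hne : x - c' ≠ 0 := sub_ne_zero.2 fun h => hx (h ▸ c'.2)
  obtain ⟨t', ht'⟩ := WithTop.ne_top_iff_exists.1 (v.ne_top_iff.2 hne)
  refine ⟨⟨t', c', ht'.symm⟩, ?_⟩
  have hlt : v (x - c) < v (x - c') := by
    rw [hxc', v.map_mul, hev, ← hev]
    simpa using (WithTop.add_lt_add_iff_left hetop).2 hdv
  rw [hc, ← ht'] at hlt
  exact Subtype.coe_lt_coe.1 (WithTop.coe_lt_coe.1 hlt)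

theorem valuation_approximant_sub_approximant {s t : approxLevels v K x} (hst : s < t) :
    v.comap K.subtype (approximant v K x t - approximant v K x s) = s := by
  have hlt : v (x - approximant v K x s) < v (x - approximant v K x t) := by
    rw [valuation_sub_approximant, valuation_sub_approximant]
    exact WithTop.coe_lt_coe.2 hst
  rw [AddValuation.comap_apply, ← valuation_sub_approximant v K x s,
    ← v.map_sub_eq_of_lt_left hlt]
  simp

theorem eventuallyConst_valuation_approximant_sub [NoMaxOrder (approxLevels v K x)] (hx : x ∉ K)
    (c : K) : EventuallyConst (fun t => v.comap K.subtype (approximant v K x t - c)) atTop := by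
  have hxc : x - c ≠ 0 := sub_ne_zero.2 fun h => hx (h ▸ c.2)
  obtain ⟨γ, hγ⟩ := WithTop.ne_top_iff_exists.1 (v.ne_top_iff.2 hxc)
  refine eventuallyConst_iff_exists_eventuallyEq.2 ⟨v (x - c), ?_⟩
  filter_upwards [eventually_gt_atTop (⟨γ, c, hγ.symm⟩ : approxLevels v K x)] with t ht
  have hlt : v (x - c) < v (x - approximant v K x t) := by
    rw [valuation_sub_approximant, ← hγ]
    exact WithTop.coe_lt_coe.2 ht
  rw [AddValuation.comap_apply, ← v.map_sub_eq_of_lt_left hlt]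
  simp

theorem liftsSimpleRoots_comap_subtype
    (hhens : ∀ P : Polynomial L, (∀ i, P.coeff i ∈ K ∧ 0 ≤ v (P.coeff i)) →
      ∀ a ∈ K, 0 ≤ v a → 0 < v (P.eval a) → v (P.derivative.eval a) = 0 →
        ∃ b ∈ K, 0 ≤ v b ∧ P.eval b = 0 ∧ 0 < v (b - a)) :
    LiftsSimpleRoots (v.comap K.subtype) := by
  have heval : ∀ (p : K[X]) (y : K), (p.map K.subtype).eval (y : L) = p.eval y :=
    fun p y => eval_map_apply (f := K.subtype) y
  intro D hD r hr hDr hD'r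
  obtain ⟨b, hbK, -, hb, -⟩ := hhens (D.map K.subtype) (fun i => ⟨by simp, by simpa using hD i⟩)
    r r.2 hr (by rwa [heval]) (by rwa [derivative_map, heval])
  exact ⟨⟨b, hbK⟩, Subtype.ext ((heval D _).symm.trans hb)⟩

end Approximation

/-- Let `(K,v)` be a Henselian valued field whose residue field has characteristic `0`
(here `K` is a subfield of `L` carrying the restricted valuation; Henselianity of `K`
is expressed by the simple-zero-lifting property for polynomials over `O_K`, residue
characteristic `0` by `v(n) = 0` for positive integers `n`). If `L` is an algebraic
valued field extension of `K` which is immediate (same residue field and same value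
group), then `L = K`. -/
theorem stmt_10 {L Γ : Type*} [Field L] [AddCommGroup Γ] [LinearOrder Γ] [IsOrderedAddMonoid Γ]
    (v : AddValuation L (WithTop Γ)) (K : Subfield L)
    (hres0 : ∀ n : ℕ, 0 < n → v (n : L) = 0)
    (hhens : ∀ P : Polynomial L, (∀ i, P.coeff i ∈ K ∧ 0 ≤ v (P.coeff i)) →
      ∀ a ∈ K, 0 ≤ v a → 0 < v (P.eval a) → v (P.derivative.eval a) = 0 →
        ∃ b ∈ K, 0 ≤ v b ∧ P.eval b = 0 ∧ 0 < v (b - a))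
    (halg : ∀ x : L, ∃ P : Polynomial L, P ≠ 0 ∧ (∀ i, P.coeff i ∈ K) ∧ P.eval x = 0)
    (hΓ : ∀ x : L, x ≠ 0 → ∃ b ∈ K, b ≠ 0 ∧ v b = v x)
    (hk : ∀ x : L, v x = 0 → ∃ b ∈ K, 0 < v (x - b)) :
    ∀ x : L, x ∈ K := by
  intro x
  by_contra hx
  have := nonempty_approxLevels v K x fun h => hx (h ▸ K.zero_mem)
  have := noMaxOrder_approxLevels v K x hΓ hk hx
  obtain ⟨P, hP0, hPK, hPx⟩ := halg x
  obtain ⟨q, rfl⟩ : ∃ q : K[X], q.map K.subtype = P :=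
    (lifts_iff_set_range P).1 ((lifts_iff_coeff_lifts P).2 fun n => ⟨⟨_, hPK n⟩, rfl⟩)
  have hstable := eventuallyConst_valuation_eval (approximant v K x)
    (liftsSimpleRoots_comap_subtype v K hhens) (fun n hn => by simpa using hres0 n hn)
    (Subtype.strictMono_coe _) (fun _ _ => valuation_approximant_sub_approximant v K x)
    (eventuallyConst_valuation_approximant_sub v K x hx) q
  refine not_eventuallyConst_valuation_eval v (Subtype.strictMono_coe _) x
    (fun t => (approximant v K x t : L))
    (fun t => by rw [v.map_sub_swap, valuation_sub_approximant])
    hP0 hPx (hstable.congr (.of_forall fun t => ?_))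
  exact congrArg v (eval_map_apply (f := K.subtype) _).symm
end

section
/- Let (K,v) be a valued field with residue field k and suppose the multiplicative group k^× is pure injective (e.g., K is ℵ₁-saturated). Then there exists an angular component map ac : K → k, i.e., ac(a)=0 iff a=0, ac restricts to a group homomorphism K^× → k^×, and ac(a) = res(a) whenever v(a) = 0. -/
/-- Let `(K,v)` be a valued field with residue field `k` such that the multiplicative
group `k^×` is pure injective (any homomorphism from a pure subgroup of an abelian
group into `k^×` extends to the whole group). Then `K` admits an angular component map
`ac : K → k`: `ac(a) = 0` iff `a = 0`, `ac` restricts to a multiplicative group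
homomorphism `K^× → k^×`, and `ac(a) = res(a)` whenever `v(a) = 0` (multiplicatively,
`v(a) = 1`). -/
theorem stmt_16 {K Γ₀ : Type u} [Field K] [LinearOrderedCommGroupWithZero Γ₀]
    (v : Valuation K Γ₀)
    (hpi : ∀ (C : Type u) [CommGroup C] (B : Subgroup C),
      (∀ c : C, (∃ n : ℕ, 0 < n ∧ c ^ n ∈ B) → c ∈ B) →
      ∀ f : B →* (IsLocalRing.ResidueField v.valuationSubring)ˣ,
        ∃ g : C →* (IsLocalRing.ResidueField v.valuationSubring)ˣ,
          ∀ b : B, g b = f b) :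
    ∃ ac : K → IsLocalRing.ResidueField v.valuationSubring,
      (∀ a : K, ac a = 0 ↔ a = 0) ∧
      (ac 1 = 1) ∧
      (∀ a b : K, a ≠ 0 → b ≠ 0 → ac (a * b) = ac a * ac b) ∧
      (∀ (a : K) (ha : v a = 1),
        ac a = IsLocalRing.residue v.valuationSubring
          ⟨a, (Valuation.mem_valuationSubring_iff v a).mpr ha.le⟩) := by
  classical
  set R := v.valuationSubring with hR
  -- the subgroup of units with valuation 1
  set B : Subgroup Kˣ :=
    { carrier := {u : Kˣ | v (u : K) = 1}
      mul_mem' := by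
        intro a b ha hb
        simp only [Set.mem_setOf_eq, Units.val_mul, v.map_mul] at *
        rw [ha, hb, one_mul]
      one_mem' := by simp [Set.mem_setOf_eq]
      inv_mem' := by
        intro a ha
        simp only [Set.mem_setOf_eq] at *
        rw [Units.val_inv_eq_inv_val, map_inv₀, ha, inv_one] } with hB
  have hmemB : ∀ u : Kˣ, u ∈ B ↔ v (u : K) = 1 := fun u => Iff.rfl
  -- purity of B in Kˣ
  have hpure : ∀ c : Kˣ, (∃ n : ℕ, 0 < n ∧ c ^ n ∈ B) → c ∈ B := by
    intro c ⟨n, hn, hcn⟩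
    rw [hmemB] at hcn ⊢
    rw [Units.val_pow_eq_pow_val, map_pow] at hcn
    rcases lt_trichotomy (v (c : K)) 1 with h | h | h
    · have h0 : (0:Γ₀) ≤ v (c : K) := zero_le'
      have := pow_lt_one₀ h0 h hn.ne'
      rw [hcn] at this; exact absurd this (lt_irrefl 1)
    · exact h
    · have := one_lt_pow₀ h hn.ne'
      rw [hcn] at this; exact absurd this (lt_irrefl 1)
  -- the map from B to units of R
  have hvalB : ∀ b : B, ((b : Kˣ) : K) ∈ R := fun b =>
    (Valuation.mem_valuationSubring_iff v _).mpr (le_of_eq b.2)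
  have hvalBinv : ∀ b : B, (((b : Kˣ)⁻¹ : Kˣ) : K) ∈ R := by
    intro b
    have : (b : Kˣ)⁻¹ ∈ B := B.inv_mem b.2
    exact (Valuation.mem_valuationSubring_iff v _).mpr (le_of_eq this)
  let toRu : B → Rˣ := fun b =>
    { val := ⟨((b : Kˣ) : K), hvalB b⟩
      inv := ⟨(((b : Kˣ)⁻¹ : Kˣ) : K), hvalBinv b⟩
      val_inv := by ext; simp
      inv_val := by ext; simp }
  let homBR : B →* Rˣ := MonoidHom.mk' toRu (by
    intro a b
    ext
    simp [toRu])
  let f : B →* (IsLocalRing.ResidueField R)ˣ :=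
    (Units.map (IsLocalRing.residue R).toMonoidHom).comp homBR
  obtain ⟨g, hg⟩ := hpi Kˣ B hpure f
  refine ⟨fun a => if h : a = 0 then 0 else (g (Units.mk0 a h) : _), ?_, ?_, ?_, ?_⟩
  · intro a
    dsimp only
    constructor
    · intro h
      by_contra ha
      rw [dif_neg ha] at h
      exact (g (Units.mk0 a ha)).ne_zero h
    · intro h; rw [dif_pos h]
  · dsimp only
    rw [dif_neg one_ne_zero]
    have : Units.mk0 (1:K) one_ne_zero = 1 := by ext; simp
    rw [this, map_one, Units.val_one]
  · intro a b ha hb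
    dsimp only
    rw [dif_neg (mul_ne_zero ha hb), dif_neg ha, dif_neg hb]
    have : Units.mk0 (a*b) (mul_ne_zero ha hb) = Units.mk0 a ha * Units.mk0 b hb := by
      ext; simp
    rw [this, map_mul, Units.val_mul]
  · intro a ha
    have ha0 : a ≠ 0 := by
      intro h; rw [h, map_zero] at ha; exact zero_ne_one ha
    dsimp only
    rw [dif_neg ha0]
    have hmem : Units.mk0 a ha0 ∈ B := by rw [hmemB]; exact ha
    have := hg ⟨Units.mk0 a ha0, hmem⟩
    rw [this]
    rfl
end

section
/- For p an odd prime, ℤ_p = {a ∈ ℚ_p : ∃ y, 1 + p·a² = y²}. That is, a ∈ ℚ_p satisfies v_p(a) ≥ 0 if and only if 1 + p·a² is a square in ℚ_p. -/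
/-!
If `‖a‖ ≤ 1`, then `1 + p a²` is congruent to `1` modulo `p`, and Hensel's lemma lifts the
simple root `1` of `Y² - (1 + p a²)` (simple because `2` is a unit, `p` being odd).
If `‖a‖ > 1`, then `p a²` dominates `1`, so `1 + p a²` has the odd valuation
`1 + 2 v(a)`, which a square cannot have.
-/

open Polynomial

namespace PadicInt

variable {p : ℕ} [Fact p.Prime]

theorem norm_two_eq_one (hp : p ≠ 2) : ‖(2 : ℤ_[p])‖ = 1 := by
  exact_mod_cast norm_natCast_eq_one_iff.mpr
    ((Nat.coprime_primes Fact.out Nat.prime_two).mpr hp)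

theorem isSquare_one_add_of_norm_lt_one (hp : p ≠ 2) {x : ℤ_[p]} (hx : ‖x‖ < 1) :
    IsSquare (1 + x) := by
  have hnorm : ‖(X ^ 2 - C (1 + x)).aeval (1 : ℤ_[p])‖ <
      ‖(X ^ 2 - C (1 + x)).derivative.aeval (1 : ℤ_[p])‖ ^ 2 := by
    simpa [derivative_pow, norm_two_eq_one hp] using hx
  obtain ⟨z, hz, -⟩ := hensels_lemma hnorm
  have hz' : z ^ 2 - (1 + x) = 0 := by simpa using hz
  exact ⟨z, by rw [← sq, eq_comm, ← sub_eq_zero, hz']⟩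

end PadicInt

namespace Padic

variable {p : ℕ} [Fact p.Prime]

theorem valuation_add_of_lt {x y : ℚ_[p]} (hx : x ≠ 0) (hxy : x.valuation < y.valuation) :
    (x + y).valuation = x.valuation := by
  obtain rfl | hy := eq_or_ne y 0
  · rw [add_zero]
  have hp1 : (1 : ℝ) < p := mod_cast (Fact.out : p.Prime).one_lt
  have hlt : ‖y‖ < ‖x‖ := by
    rw [norm_eq_zpow_neg_valuation hx, norm_eq_zpow_neg_valuation hy]
    exact zpow_lt_zpow_right₀ hp1 (neg_lt_neg hxy)
  have hsum : ‖x + y‖ = ‖x‖ := by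
    rw [add_eq_max_of_ne hlt.ne', max_eq_left hlt.le]
  have hxy0 : x + y ≠ 0 := norm_ne_zero_iff.mp (hsum ▸ norm_ne_zero_iff.mpr hx)
  rwa [norm_eq_zpow_neg_valuation hxy0, norm_eq_zpow_neg_valuation hx,
    zpow_right_inj₀ (by positivity) hp1.ne', neg_inj] at hsum

end Padic

/-- For `p` an odd prime, `ℤ_p = {a ∈ ℚ_p : ∃ y, 1 + p·a² = y²}`: an element
`a ∈ ℚ_p` lies in `ℤ_p` (i.e. `‖a‖ ≤ 1`, equivalently `v_p(a) ≥ 0`) if and only if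
`1 + p·a²` is a square in `ℚ_p`. -/
theorem stmt_17 (p : ℕ) [Fact p.Prime] (hp : p ≠ 2) (a : ℚ_[p]) :
    ‖a‖ ≤ 1 ↔ ∃ y : ℚ_[p], 1 + (p : ℚ_[p]) * a ^ 2 = y ^ 2 := by
  constructor
  · intro ha
    have hpa : ‖(p : ℤ_[p]) * ⟨a, ha⟩ ^ 2‖ < 1 :=
      (PadicInt.norm_lt_one_iff_dvd _).mpr (dvd_mul_right _ _)
    obtain ⟨z, hz⟩ := PadicInt.isSquare_one_add_of_norm_lt_one hp hpa
    refine ⟨z, ?_⟩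
    rw [← sq] at hz
    exact_mod_cast congrArg ((↑) : ℤ_[p] → ℚ_[p]) hz
  · rintro ⟨y, hy⟩
    by_contra ha
    rw [Padic.norm_le_one_iff_val_nonneg, not_le] at ha
    have ha0 : a ≠ 0 := by
      rintro rfl
      simp at ha
    have hpa0 : (p : ℚ_[p]) * a ^ 2 ≠ 0 := mul_ne_zero (NeZero.ne _) (pow_ne_zero 2 ha0)
    have hvpa : ((p : ℚ_[p]) * a ^ 2).valuation = 1 + 2 * a.valuation := by
      rw [Padic.valuation_mul (NeZero.ne _) (pow_ne_zero 2 ha0), Padic.valuation_p,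
        Padic.valuation_pow, Nat.cast_ofNat]
    have hval : (y ^ 2).valuation = 1 + 2 * a.valuation := by
      rw [← hy, add_comm,
        Padic.valuation_add_of_lt hpa0 (by rw [hvpa, Padic.valuation_one]; omega), hvpa]
    rw [Padic.valuation_pow] at hval
    omega
end

section
/- Let R be a Henselian local ring whose residue field k = R/m has characteristic 0. Then the residue field lifts: there exists a subfield F ⊆ R such that the residue map R → k restricts to an isomorphism F → k. -/
open IsLocalRing Polynomial

section Aux

variable {R : Type*} [CommRing R] [IsLocalRing R]

/-- The "fraction subfield" generated by a subring `A` of a local ring `R`: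
elements of the form `a * b⁻¹` with `a b ∈ A`, `b` a unit. -/
def fracSubring (A : Subring R) : Subring R where
  carrier := {y | ∃ a ∈ A, ∃ b ∈ A, residue R b ≠ 0 ∧ y * b = a}
  one_mem' := ⟨1, A.one_mem, 1, A.one_mem, by simp, by simp⟩
  zero_mem' := ⟨0, A.zero_mem, 1, A.one_mem, by simp, by simp⟩
  mul_mem' := by
    rintro y z ⟨a₁, ha₁, b₁, hb₁, hb₁', e₁⟩ ⟨a₂, ha₂, b₂, hb₂, hb₂', e₂⟩
    refine ⟨a₁ * a₂, A.mul_mem ha₁ ha₂, b₁ * b₂, A.mul_mem hb₁ hb₂, ?_, ?_⟩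
    · simp only [map_mul]; exact mul_ne_zero hb₁' hb₂'
    · rw [show y * z * (b₁ * b₂) = (y * b₁) * (z * b₂) by ring, e₁, e₂]
  add_mem' := by
    rintro y z ⟨a₁, ha₁, b₁, hb₁, hb₁', e₁⟩ ⟨a₂, ha₂, b₂, hb₂, hb₂', e₂⟩
    refine ⟨a₁ * b₂ + a₂ * b₁, A.add_mem (A.mul_mem ha₁ hb₂) (A.mul_mem ha₂ hb₁),
      b₁ * b₂, A.mul_mem hb₁ hb₂, ?_, ?_⟩
    · simp only [map_mul]; exact mul_ne_zero hb₁' hb₂'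
    · rw [show (y + z) * (b₁ * b₂) = (y * b₁) * b₂ + (z * b₂) * b₁ by ring, e₁, e₂]
  neg_mem' := by
    rintro y ⟨a, ha, b, hb, hb', e⟩
    exact ⟨-a, A.neg_mem ha, b, hb, hb', by rw [neg_mul, e]⟩

theorem le_fracSubring (A : Subring R) : A ≤ fracSubring A := fun a ha =>
  ⟨a, ha, 1, A.one_mem, by simp, by simp⟩

theorem isUnit_of_residue_ne_zero {a : R} (h : residue R a ≠ 0) : IsUnit a := by
  by_contra hu
  exact h (Ideal.Quotient.eq_zero_iff_mem.mpr hu)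

theorem isField_fracSubring (A : Subring R)
    (hA : ∀ a ∈ A, residue R a = 0 → a = 0) : IsField (fracSubring A) := by
  refine ⟨⟨0, 1, fun h => zero_ne_one (congrArg Subtype.val h)⟩,
    fun a b => Subtype.ext (mul_comm (a : R) b), ?_⟩
  rintro ⟨y, a, ha, b, hb, hb', e⟩ hy0
  have hyne : y ≠ 0 := fun h => hy0 (Subtype.ext h)
  have hbu : IsUnit b := isUnit_of_residue_ne_zero hb'
  have hane : a ≠ 0 := by
    rintro rfl
    exact hyne (by simpa [hbu.mul_left_eq_zero] using e)
  have har : residue R a ≠ 0 := fun h => hane (hA a ha h)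
  have hau : IsUnit a := isUnit_of_residue_ne_zero har
  obtain ⟨u, hu⟩ := hau
  refine ⟨⟨b * (↑u⁻¹ : Rˣ), b, hb, a, ha, har, ?_⟩, ?_⟩
  · rw [mul_assoc, ← hu, Units.inv_mul, mul_one]
  · apply Subtype.ext
    show y * (b * (↑u⁻¹ : Rˣ)) = 1
    rw [← mul_assoc, e, ← hu, Units.mul_inv]

theorem subfield_residue_inj (F : Subring R) (hF : IsField F) :
    ∀ a ∈ F, residue R a = 0 → a = 0 := by
  intro a ha h0
  by_contra hne
  obtain ⟨⟨c, hc⟩, hac⟩ := hF.mul_inv_cancel (a := ⟨a, ha⟩) (fun h => hne (congrArg Subtype.val h))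
  have : residue R a * residue R c = 1 := by
    rw [← map_mul]
    exact congrArg (residue R) (congrArg Subtype.val hac)
  rw [h0, zero_mul] at this
  exact zero_ne_one this

end Aux

/-- Lifting theorem: if `R` is a Henselian local ring whose residue field has
characteristic `0`, then there is a subfield `F ⊆ R` (a subring which is a field)
such that the residue map restricts to an isomorphism `F → R/m`. -/
theorem stmt_18 {R : Type*} [CommRing R] [HenselianLocalRing R]
    [CharZero (IsLocalRing.ResidueField R)] :
    ∃ F : Subring R, IsField F ∧
      Function.Bijective ((IsLocalRing.residue R).comp F.subtype) := by
  classical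
  set S : Set (Subring R) := {F | IsField F} with hS
  -- the prime field ℚ sits inside R, giving a smallest subfield
  have hbot : fracSubring (⊥ : Subring R) ∈ S := by
    apply isField_fracSubring
    intro a ha h0
    obtain ⟨n, rfl⟩ := Subring.mem_bot.mp ha
    rw [map_intCast] at h0
    have : n = 0 := by exact_mod_cast h0
    simp [this]
  -- Zorn's lemma
  have hchain : ∀ c ⊆ S, IsChain (· ≤ ·) c → ∀ y ∈ c, ∃ ub ∈ S, ∀ z ∈ c, z ≤ ub := by
    intro c hcS hc y hy
    refine ⟨sSup c, ?_, fun z hz => le_sSup hz⟩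
    have hcne : c.Nonempty := ⟨y, hy⟩
    have hdir : DirectedOn (· ≤ ·) c := hc.directedOn
    have hmem : ∀ x : R, x ∈ sSup c ↔ ∃ F ∈ c, x ∈ F := fun x =>
      Subring.mem_sSup_of_directedOn hcne hdir
    refine ⟨⟨0, 1, fun h => zero_ne_one (congrArg Subtype.val h)⟩,
      fun a b => Subtype.ext (mul_comm (a : R) b), ?_⟩
    rintro ⟨x, hx⟩ hx0
    obtain ⟨G, hGc, hxG⟩ := (hmem x).mp hx
    have hGF : IsField G := hcS hGc
    obtain ⟨⟨z, hz⟩, hxz⟩ := hGF.mul_inv_cancel (a := ⟨x, hxG⟩)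
      (fun h => hx0 (Subtype.ext (congrArg Subtype.val h : x = 0)))
    refine ⟨⟨z, (hmem z).mpr ⟨G, hGc, hz⟩⟩, Subtype.ext ?_⟩
    show x * z = 1
    exact congrArg Subtype.val hxz
  obtain ⟨F, -, hmax⟩ := zorn_le_nonempty₀ S hchain _ hbot
  have hFS : IsField F := hmax.prop
  -- F is a maximal subfield; show the residue map restricted to F is bijective
  refine ⟨F, hFS, ?_, ?_⟩
  · -- injectivity
    intro a b hab
    have : residue R ((a : R) - b) = 0 := by
      rw [map_sub, sub_eq_zero]; exact hab
    have := subfield_residue_inj F hFS _ (F.sub_mem a.2 b.2) this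
    exact Subtype.ext (sub_eq_zero.mp this)
  -- surjectivity
  intro x
  by_contra hx
  push_neg at hx
  set f : F →+* IsLocalRing.ResidueField R := (IsLocalRing.residue R).comp F.subtype with hf
  letI : Field F := hFS.toField
  letI : Algebra F (IsLocalRing.ResidueField R) := f.toAlgebra
  have hfa : (algebraMap F (IsLocalRing.ResidueField R)) = f := rfl
  have keval : ∀ (b : R), residue R b = x → ∀ p : Polynomial F,
      residue R (p.eval₂ F.subtype b) = Polynomial.aeval x p := by
    intro b hb p
    rw [Polynomial.hom_eval₂, hb, Polynomial.aeval_def, hfa, hf]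
  -- construct b with residue b = x such that eval₂ at b is "injective mod m"
  have key : ∃ b : R, residue R b = x ∧ ∀ p : Polynomial F,
      residue R (p.eval₂ F.subtype b) = 0 → p.eval₂ F.subtype b = 0 := by
    by_cases halg : ∃ p : Polynomial F, p ≠ 0 ∧ Polynomial.aeval x p = 0
    · -- algebraic case: use Henselianness to find a root of the minimal polynomial
      obtain ⟨p, hp0, hpx⟩ := halg
      have hint : IsIntegral F x := (IsAlgebraic.isIntegral ⟨p, hp0, hpx⟩)
      set P := minpoly F x with hP
      have hPmonic : P.Monic := minpoly.monic hint
      have hPx : Polynomial.aeval x P = 0 := minpoly.aeval F x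
      -- derivative of P does not vanish at x
      haveI : CharZero F := f.charZero
      have hder : Polynomial.aeval x P.derivative ≠ 0 := by
        intro h
        have hd0 : P.derivative ≠ 0 := by
          have h1 := minpoly.natDegree_pos hint
          intro hc
          have h2 := Polynomial.natDegree_eq_zero_of_derivative_eq_zero hc
          rw [hP] at h2
          omega
        have h2 := minpoly.degree_le_of_ne_zero F x hd0 h
        have h3 := Polynomial.degree_derivative_lt (minpoly.ne_zero hint)
        exact absurd h2 (not_le_of_gt h3)
      -- lift and apply Henselian property
      obtain ⟨a₀, ha₀⟩ := IsLocalRing.residue_surjective (R := R) x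
      set Q : Polynomial R := P.map F.subtype with hQ
      have hQeval : ∀ (c : R), residue R c = x → ∀ p : Polynomial F,
          residue R ((p.map F.subtype).eval c) = Polynomial.aeval x p := by
        intro c hc p
        rw [Polynomial.eval_map]
        exact keval c hc p
      have hQmonic : Q.Monic := hPmonic.map F.subtype
      have h1 : Q.eval a₀ ∈ IsLocalRing.maximalIdeal R := by
        rw [← Ideal.Quotient.eq_zero_iff_mem]
        show residue R (Q.eval a₀) = 0
        rw [hQ, hQeval a₀ ha₀ P, hPx]
      have h2 : IsUnit (Q.derivative.eval a₀) := by
        apply isUnit_of_residue_ne_zero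
        rw [hQ, Polynomial.derivative_map, hQeval a₀ ha₀ P.derivative]
        exact hder
      obtain ⟨b, hroot, hmem⟩ := HenselianLocalRing.is_henselian Q hQmonic a₀ h1 h2
      have hbx : residue R b = x := by
        have : residue R (b - a₀) = 0 := Ideal.Quotient.eq_zero_iff_mem.mpr hmem
        rw [map_sub, sub_eq_zero] at this
        rw [this, ha₀]
      refine ⟨b, hbx, ?_⟩
      intro p hp
      rw [keval b hbx p] at hp
      obtain ⟨s, hs⟩ := minpoly.dvd F x hp
      have : Polynomial.eval₂ F.subtype b P = 0 := by
        rw [Polynomial.eval₂_eq_eval_map, ← hQ]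
        exact hroot
      rw [hs, Polynomial.eval₂_mul, this, zero_mul]
    · -- transcendental case: any lift works
      push_neg at halg
      obtain ⟨b, hb⟩ := IsLocalRing.residue_surjective (R := R) x
      refine ⟨b, hb, ?_⟩
      intro p hp
      rw [keval b hb p] at hp
      by_cases hp0 : p = 0
      · rw [hp0, Polynomial.eval₂_zero]
      · exact absurd hp (halg p hp0)
  obtain ⟨b, hbx, hinj⟩ := key
  -- the subring F[b] and its fraction subfield
  set A : Subring R := (Polynomial.eval₂RingHom F.subtype b).range with hA
  have hAinj : ∀ a ∈ A, residue R a = 0 → a = 0 := by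
    rintro a ⟨p, rfl⟩ h0
    exact hinj p h0
  set B : Subring R := fracSubring A with hB
  have hBS : B ∈ S := isField_fracSubring A hAinj
  have hFA : F ≤ A := by
    intro c hc
    exact ⟨Polynomial.C ⟨c, hc⟩, by simp⟩
  have hFB : F ≤ B := le_trans hFA (le_fracSubring A)
  have hbA : b ∈ A := ⟨Polynomial.X, by simp⟩
  have hbB : b ∈ B := le_fracSubring A hbA
  have hBF : B = F := (hmax.eq_of_le hBS hFB).symm
  rw [hBF] at hbB
  exact hx ⟨b, hbB⟩ hbx
end
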